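/- arXiv:2001.06820 — 2 statements merged into one kernel-verified Lean document; each statement's English description precedes it below -/
import Mathlib

section
/- Let a > −1, b > −1 and c > max{0, a−b} be real numbers. Then for all x > 0: (i) x ((c+b+1)/((a+1)(b+1))) W(x; a, b, c) = W(x; a+1, b+1, c); (ii) x ((c+b+2)/((a+1)(b+1))) W(x; a, b, c+1) = W(x; a+1, b+1, c+1); and (iii) with η = (c+b+2)(c+b+3)/((a+1)(b+1)(c+1)(c+b−a+1)), one has x η ( (x + 2c + b − a + 1) W(x; a, b, c+1) − (c+b+1) W(x; a, b, c) ) = W(x; a+1, b+1, c+2). -/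
open MeasureTheory Filter Set
open scoped Topology

/-- Confluent hypergeometric function of the second kind (Tricomi function),
via its integral representation, valid for `α > 0`, `x > 0`. -/
noncomputable def TricomiU (α β x : ℝ) : ℝ :=
  (1 / Real.Gamma α) *
    ∫ t in Set.Ioi (0:ℝ), t ^ (α - 1) * (1 + t) ^ (β - α - 1) * Real.exp (-t * x)

/-- The weight function `W(x; a, b, c)`. -/
noncomputable def W (a b c x : ℝ) : ℝ :=
  (Real.Gamma (c + b + 1) / (Real.Gamma (a + 1) * Real.Gamma (b + 1))) *
    Real.exp (-x) * x ^ a * TricomiU c (a - b + 1) x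


lemma tendsto_aux (p q x : ℝ) (hx : 0 < x) :
    Tendsto (fun t : ℝ => t ^ p * (1 + t) ^ q * Real.exp (-t * x)) atTop (𝓝 0) := by
  have h2 : Tendsto (fun t : ℝ => (1 + t⁻¹) ^ q) atTop (𝓝 1) := by
    have : Tendsto (fun t : ℝ => 1 + t⁻¹) atTop (𝓝 1) := by
      simpa using (tendsto_const_nhds.add tendsto_inv_atTop_zero : Tendsto (fun t:ℝ => 1+t⁻¹) atTop (𝓝 (1+0)))
    have hcont : ContinuousAt (fun z : ℝ => z ^ q) 1 :=
      (Real.continuousAt_rpow_const 1 q (Or.inl one_ne_zero))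
    simpa [Function.comp_def] using (hcont.tendsto.comp this)
  have h1 := tendsto_rpow_mul_exp_neg_mul_atTop_nhds_zero (p + q) x hx
  have h3 : Tendsto (fun t : ℝ => t ^ (p + q) * Real.exp (-x * t) * (1 + t⁻¹) ^ q) atTop (𝓝 0) := by
    simpa using h1.mul h2
  refine h3.congr' ?_
  filter_upwards [eventually_gt_atTop (0:ℝ)] with t ht
  have ht' : (0:ℝ) < 1 + t⁻¹ := by positivity
  have : t ^ q * (1 + t⁻¹) ^ q = (1 + t) ^ q := by
    rw [← Real.mul_rpow ht.le ht'.le, show t * (1 + t⁻¹) = 1 + t by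
      rw [mul_add, mul_inv_cancel₀ ht.ne']; ring]
  rw [Real.rpow_add ht]
  calc t ^ p * t ^ q * Real.exp (-x * t) * (1 + t⁻¹) ^ q
      = t ^ p * (t ^ q * (1 + t⁻¹) ^ q) * Real.exp (-x * t) := by ring
    _ = t ^ p * (1 + t) ^ q * Real.exp (-t * x) := by rw [this]; ring_nf

lemma integrable_aux (p q x : ℝ) (hp : -1 < p) (hx : 0 < x) :
    IntegrableOn (fun t : ℝ => t ^ p * (1 + t) ^ q * Real.exp (-t * x)) (Ioi 0) := by
  rw [← Ioc_union_Ioi_eq_Ioi (zero_le_one (α := ℝ)), integrableOn_union]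
  constructor
  · rw [← integrableOn_Icc_iff_integrableOn_Ioc]
    have hint : IntegrableOn (fun t : ℝ => t ^ p) (Icc 0 1) := by
      refine (intervalIntegrable_iff_integrableOn_Icc_of_le zero_le_one).mp ?_
      exact intervalIntegral.intervalIntegrable_rpow' hp
    have hcont : ContinuousOn (fun t : ℝ => (1 + t) ^ q * Real.exp (-t * x)) (Icc 0 1) := by
      refine ContinuousOn.mul ?_ (Continuous.continuousOn (by continuity))
      refine ContinuousOn.rpow_const (continuous_const.add continuous_id).continuousOn ?_
      intro t ht
      have : (0:ℝ) < 1 + t := by have := ht.1; linarith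
      exact Or.inl this.ne'
    have := hint.mul_continuousOn hcont isCompact_Icc
    refine this.congr_fun (fun t _ => by ring) measurableSet_Icc
  · refine integrable_of_isBigO_exp_neg (half_pos hx) ?_ ?_
    · refine ContinuousOn.mul (ContinuousOn.mul ?_ ?_) (Continuous.continuousOn (by continuity))
      · exact ContinuousOn.rpow_const continuousOn_id (fun t ht => Or.inl (by
          have : (1:ℝ) ≤ t := ht; positivity))
      · exact ContinuousOn.rpow_const (continuous_const.add continuous_id).continuousOn (fun t ht => Or.inl (by
          have : (1:ℝ) ≤ t := ht; positivity))
    · have h0 := tendsto_aux p q (x/2) (half_pos hx)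
      rw [Asymptotics.isBigO_iff]
      refine ⟨1, ?_⟩
      have hev := h0.eventually (eventually_le_nhds (by norm_num : (0:ℝ) < 1))
      filter_upwards [hev, eventually_gt_atTop (0:ℝ)] with t h1 ht
      have hsplit : Real.exp (-t * x) = Real.exp (-t * (x/2)) * Real.exp (-(x/2) * t) := by
        rw [← Real.exp_add]; ring_nf
      have hnn : 0 ≤ t ^ p * (1 + t) ^ q * Real.exp (-t * (x/2)) := by positivity
      rw [hsplit]
      rw [Real.norm_eq_abs, Real.norm_eq_abs, abs_of_nonneg (by positivity), abs_of_nonneg (Real.exp_pos _).le]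
      calc t ^ p * (1 + t) ^ q * (Real.exp (-t * (x/2)) * Real.exp (-(x/2) * t))
          = (t ^ p * (1 + t) ^ q * Real.exp (-t * (x/2))) * Real.exp (-(x/2) * t) := by ring
        _ ≤ 1 * Real.exp (-(x/2) * t) := by
            exact mul_le_mul_of_nonneg_right h1 (Real.exp_pos _).le


lemma split_aux (p p' q q' x : ℝ) (hp : -1 < p) (hx : 0 < x)
    (hp' : p' = p + 1) (hq' : q' = q + 1) :
    (∫ t in Ioi (0:ℝ), t ^ p * (1 + t) ^ q' * Real.exp (-t * x))
      = (∫ t in Ioi (0:ℝ), t ^ p * (1 + t) ^ q * Real.exp (-t * x))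
        + ∫ t in Ioi (0:ℝ), t ^ p' * (1 + t) ^ q * Real.exp (-t * x) := by
  rw [← integral_add (integrable_aux p q x hp hx) (integrable_aux p' q x (by linarith) hx)]
  refine setIntegral_congr_fun measurableSet_Ioi (fun t ht => ?_)
  have ht : (0:ℝ) < t := ht
  have h1 : (0:ℝ) < 1 + t := by linarith
  simp only [hp', hq', Real.rpow_add h1, Real.rpow_add ht, Real.rpow_one]
  ring

lemma ibp_aux (c q x : ℝ) (hc : 0 < c) (hx : 0 < x) :
    c * (∫ t in Ioi (0:ℝ), t ^ (c-1) * (1 + t) ^ q * Real.exp (-t * x))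
      + q * (∫ t in Ioi (0:ℝ), t ^ c * (1 + t) ^ (q-1) * Real.exp (-t * x))
      - x * (∫ t in Ioi (0:ℝ), t ^ c * (1 + t) ^ q * Real.exp (-t * x)) = 0 := by
  set A : ℝ → ℝ := fun t => t ^ (c-1) * (1 + t) ^ q * Real.exp (-t * x) with hA
  set B : ℝ → ℝ := fun t => t ^ c * (1 + t) ^ (q-1) * Real.exp (-t * x) with hB
  set C : ℝ → ℝ := fun t => t ^ c * (1 + t) ^ q * Real.exp (-t * x) with hC
  have hAint := integrable_aux (c-1) q x (by linarith) hx
  have hBint := integrable_aux c (q-1) x (by linarith) hx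
  have hCint := integrable_aux c q x (by linarith) hx
  set F : ℝ → ℝ := fun t => t ^ c * (1 + t) ^ q * Real.exp (-t * x) with hF
  set F' : ℝ → ℝ := fun t => c * A t + q * B t - x * C t with hF'
  have hderiv : ∀ t ∈ Ioi (0:ℝ), HasDerivAt F (F' t) t := by
    intro t ht
    have ht : (0:ℝ) < t := ht
    have h1t : (0:ℝ) < 1 + t := by linarith
    have d1 : HasDerivAt (fun t : ℝ => t ^ c) (c * t ^ (c-1)) t :=
      Real.hasDerivAt_rpow_const (Or.inl ht.ne')
    have d2 : HasDerivAt (fun t : ℝ => (1 + t) ^ q) (q * (1 + t) ^ (q-1)) t := by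
      have inner : HasDerivAt (fun t : ℝ => 1 + t) 1 t := (hasDerivAt_id t).const_add 1
      have outer : HasDerivAt (fun z : ℝ => z ^ q) (q * (1 + t) ^ (q-1)) (1 + t) :=
        Real.hasDerivAt_rpow_const (Or.inl h1t.ne')
      simpa [Function.comp_def] using outer.comp t inner
    have d3 : HasDerivAt (fun t : ℝ => Real.exp (-t * x)) (Real.exp (-t * x) * (-x)) t := by
      have inner : HasDerivAt (fun t : ℝ => -t * x) (-x) t := by
        simpa using ((hasDerivAt_id t).neg.mul_const x)
      exact (Real.hasDerivAt_exp _).comp t inner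
    have := (d1.mul d2).mul d3
    convert this using 1
    · rfl
    · rfl
    · rfl
    · simp only [F', A, B, C, F, Pi.mul_apply]
      ring
  have hcont : ContinuousWithinAt F (Ici 0) 0 := by
    have h1 : ContinuousWithinAt (fun t : ℝ => t ^ c) (Ici 0) 0 :=
      (Real.continuousAt_rpow_const 0 c (Or.inr hc.le)).continuousWithinAt
    have h2 : ContinuousAt (fun t : ℝ => (1 + t) ^ q) 0 := by
      have : ContinuousAt (fun z : ℝ => z ^ q) ((1:ℝ) + 0) :=
        Real.continuousAt_rpow_const (1 + 0) q (Or.inl (by norm_num))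
      exact this.comp ((continuous_const.add continuous_id).continuousAt)
    have h3 : ContinuousAt (fun t : ℝ => Real.exp (-t * x)) 0 :=
      (Real.continuous_exp.comp ((continuous_id.neg.mul continuous_const))).continuousAt
    exact (h1.mul h2.continuousWithinAt).mul h3.continuousWithinAt
  have hten : Tendsto F atTop (𝓝 0) := tendsto_aux c q x hx
  have hF'int : IntegrableOn F' (Ioi 0) :=
    (((hAint.const_mul c).add (hBint.const_mul q)).sub (hCint.const_mul x))
  have key := integral_Ioi_of_hasDerivAt_of_tendsto hcont hderiv hF'int hten
  have hF0 : F 0 = 0 := by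
    simp only [hF]
    rw [Real.zero_rpow hc.ne']
    ring
  rw [hF0, sub_zero] at key
  have expand : (∫ t in Ioi (0:ℝ), F' t)
      = c * (∫ t in Ioi (0:ℝ), A t) + q * (∫ t in Ioi (0:ℝ), B t)
        - x * (∫ t in Ioi (0:ℝ), C t) := by
    simp only [hF']
    have hA' : IntegrableOn (fun t => c * A t) (Ioi (0:ℝ)) := hAint.const_mul c
    have hB' : IntegrableOn (fun t => q * B t) (Ioi (0:ℝ)) := hBint.const_mul q
    have hC' : IntegrableOn (fun t => x * C t) (Ioi (0:ℝ)) := hCint.const_mul x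
    have hAB : IntegrableOn (fun t => c * A t + q * B t) (Ioi (0:ℝ)) := hA'.add hB'
    rw [integral_sub hAB hC', integral_add hA' hB',
      MeasureTheory.integral_const_mul, MeasureTheory.integral_const_mul, MeasureTheory.integral_const_mul]
  rw [← expand, key]


lemma tricomiU_rec (c β x : ℝ) (hc : 0 < c) (hx : 0 < x) :
    (x + 2*c + 2 - β) * TricomiU (c+1) β x - TricomiU c β x
      = (c+1) * (c+2-β) * TricomiU (c+2) β x := by
  unfold TricomiU
  rw [show c + 1 - 1 = c from by ring, show β - (c+1) - 1 = β - c - 2 from by ring,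
    show c + 2 - 1 = c + 1 from by ring, show β - (c+2) - 1 = β - c - 3 from by ring,
    show β - c - 1 = (β - c - 2) + 1 from by ring]
  have h1 := split_aux (c-1) c (β-c-2) ((β-c-2)+1) x (by linarith) hx (by ring) rfl
  have h2 := split_aux c (c+1) (β-c-3) (β-c-2) x (by linarith) hx rfl (by ring)
  have h3 := ibp_aux c (β-c-2) x hc hx
  rw [show β - c - 2 - 1 = β - c - 3 from by ring] at h3
  set IA := ∫ t in Ioi (0:ℝ), t ^ (c-1) * (1 + t) ^ ((β-c-2)+1) * Real.exp (-t * x)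
  set IB := ∫ t in Ioi (0:ℝ), t ^ c * (1 + t) ^ (β-c-2) * Real.exp (-t * x)
  set IC := ∫ t in Ioi (0:ℝ), t ^ (c+1) * (1 + t) ^ (β-c-3) * Real.exp (-t * x)
  set J1 := ∫ t in Ioi (0:ℝ), t ^ (c-1) * (1 + t) ^ (β-c-2) * Real.exp (-t * x)
  set J2 := ∫ t in Ioi (0:ℝ), t ^ c * (1 + t) ^ (β-c-3) * Real.exp (-t * x)
  have hrec : (x + 2*c + 2 - β) * IB - c * IA = (c+2-β) * IC := by
    linear_combination (-c)*h1 + (c+2-β)*h2 + (-1)*h3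
  have hG : Real.Gamma c ≠ 0 := (Real.Gamma_pos_of_pos hc).ne'
  rw [Real.Gamma_add_one hc.ne', show c + 2 = (c + 1) + 1 from by ring,
    Real.Gamma_add_one (by positivity : c + (1:ℝ) ≠ 0), Real.Gamma_add_one hc.ne']
  field_simp
  linear_combination hrec



set_option maxHeartbeats 2000000 in
theorem W_parameter_shift (a b c : ℝ) (ha : a > -1) (hb : b > -1)
    (hc : c > max 0 (a - b)) :
    ∀ x > (0:ℝ),
      x * ((c + b + 1) / ((a + 1) * (b + 1))) * W a b c x = W (a + 1) (b + 1) c x ∧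
      x * ((c + b + 2) / ((a + 1) * (b + 1))) * W a b (c + 1) x
        = W (a + 1) (b + 1) (c + 1) x ∧
      x * ((c + b + 2) * (c + b + 3) / ((a + 1) * (b + 1) * (c + 1) * (c + b - a + 1))) *
          ((x + 2 * c + b - a + 1) * W a b (c + 1) x - (c + b + 1) * W a b c x)
        = W (a + 1) (b + 1) (c + 2) x := by
  have hc0 : 0 < c := lt_of_le_of_lt (le_max_left _ _) hc
  have hcab : a - b < c := lt_of_le_of_lt (le_max_right _ _) hc
  have ha1 : (0:ℝ) < a + 1 := by linarith
  have hb1 : (0:ℝ) < b + 1 := by linarith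
  have hcb1 : (0:ℝ) < c + b + 1 := by linarith
  have hGA : Real.Gamma (a + 1) ≠ 0 := (Real.Gamma_pos_of_pos ha1).ne'
  have hGB : Real.Gamma (b + 1) ≠ 0 := (Real.Gamma_pos_of_pos hb1).ne'
  have hG : Real.Gamma (c + b + 1) ≠ 0 := (Real.Gamma_pos_of_pos hcb1).ne'
  intro x hx
  have hrec := tricomiU_rec c (a - b + 1) x hc0 hx
  have hxa : x ^ (a + 1) = x ^ a * x := Real.rpow_add_one hx.ne' a
  have ga : Real.Gamma (a + 1 + 1) = (a+1) * Real.Gamma (a+1) := Real.Gamma_add_one ha1.ne'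
  have gb : Real.Gamma (b + 1 + 1) = (b+1) * Real.Gamma (b+1) := Real.Gamma_add_one hb1.ne'
  have g2 : Real.Gamma (c + b + 1 + 1) = (c+b+1) * Real.Gamma (c+b+1) :=
    Real.Gamma_add_one hcb1.ne'
  have g3 : Real.Gamma (c + b + 1 + 1 + 1) = (c+b+2) * ((c+b+1) * Real.Gamma (c+b+1)) := by
    rw [Real.Gamma_add_one (by positivity), g2]; ring_nf
  have g4 : Real.Gamma (c + b + 1 + 1 + 1 + 1)
      = (c+b+3) * ((c+b+2) * ((c+b+1) * Real.Gamma (c+b+1))) := by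
    rw [Real.Gamma_add_one (by positivity), g3]; ring_nf
  unfold W
  simp only [show a + 1 - (b + 1) + 1 = a - b + 1 from by ring,
    show c + (b + 1) + 1 = c + b + 1 + 1 from by ring,
    show c + 1 + b + 1 = c + b + 1 + 1 from by ring,
    show c + 1 + (b + 1) + 1 = c + b + 1 + 1 + 1 from by ring,
    show c + 2 + (b + 1) + 1 = c + b + 1 + 1 + 1 + 1 from by ring,
    ga, gb, g2, g3, g4, hxa]
  set GA := Real.Gamma (a+1)
  set GB := Real.Gamma (b+1)
  set G := Real.Gamma (c+b+1)
  set U1 := TricomiU c (a-b+1) x with hU1d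
  set U2 := TricomiU (c+1) (a-b+1) x with hU2d
  set U3 := TricomiU (c+2) (a-b+1) x with hU3d
  set E := Real.exp (-x)
  set X := x ^ a
  refine ⟨by field_simp, by field_simp, ?_⟩
  have hne1 : c + 2 - (a - b + 1) ≠ 0 := by intro h; apply absurd hcab; linarith
  have hU3 : U3
      = ((x + 2*c + 2 - (a-b+1)) * U2 - U1)
          / ((c+1) * (c+2-(a-b+1))) := by
    rw [eq_div_iff (by positivity : ((c:ℝ)+1) * (c+2-(a-b+1)) ≠ 0)]
    linarith [hrec]
  have hn1 : (a:ℝ) + 1 ≠ 0 := ha1.ne'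
  have hn2 : (b:ℝ) + 1 ≠ 0 := hb1.ne'
  have hn3 : (c:ℝ) + 1 ≠ 0 := by positivity
  have hn4 : c + b - a + 1 ≠ 0 := by intro h; apply absurd hcab; linarith
  rw [hU3]
  field_simp
  ring
end

section
/- Let a > −1, b > −1, c > max{0, a−b} be real numbers and d ∈ {0, 1}. Then for all nonnegative integers k and n with n ≥ 2k + 2, ∫_0^∞ x^k P_n^{(d)}(x; a, b, c) W(x; a, b, c+1−d) dx = 0. -/
open MeasureTheory Filter Set

/-- Pochhammer symbol `(z)_k = z (z+1) ⋯ (z+k-1)`. -/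
noncomputable def poch (z : ℝ) (k : ℕ) : ℝ := ∏ i ∈ Finset.range k, (z + i)

/-- The monic type II multiple orthogonal polynomial on the step line:
`P_n^{(d)}(x; a, b, c) = Σ_{j=0}^n (−1)^{n−j} C(n,j)
  ((a+1+j)_{n−j}(b+1+j)_{n−j}/(c+b+1+⌊(n+d)/2⌋+j)_{n−j}) x^j`. -/
noncomputable def Ptype2 (d : ℕ) (a b c : ℝ) (n : ℕ) (x : ℝ) : ℝ :=
  ∑ j ∈ Finset.range (n + 1),
    (-1 : ℝ) ^ (n - j) * (n.choose j : ℝ) *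
      (poch (a + 1 + j) (n - j) * poch (b + 1 + j) (n - j) /
        poch (c + b + 1 + (((n + d) / 2 : ℕ) : ℝ) + j) (n - j)) * x ^ j

/-!
Writing `U` as a Laplace transform and exchanging the two integrals turns the `m`-th moment of
`W(x; a, b, c)` into `Γ(a+m+1)` times a beta integral of the second kind, which gives
`∫ x^m W(x; a, b, c) dx = (a+1)_m (b+1)_m / (c+b+1)_m`.
Integrating `x^k P_n^{(d)}` termwise against `W(x; a, b, c+1-d)`, the `j`-th term becomes a
constant times `(-1)^{n-j} C(n,j) q(j)`, where, with `ε = c+2-d+b` and `L = ⌊(n+d)/2⌋+d-1`,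
`q(j) = (a+1+j)_k (b+1+j)_k (ε+k+j)_{L-k}` is a polynomial in `j` of degree `k + L < n`.
The alternating binomial sum is the `n`-th forward difference of `q`, hence zero.
-/
open Polynomial

lemma poch_eq_eval_ascPochhammer (z : ℝ) (k : ℕ) : poch z k = (ascPochhammer ℝ k).eval z := by
  induction k with
  | zero => simp [poch]
  | succ k ih =>
    rw [poch, Finset.prod_range_succ, ← poch, ih, ascPochhammer_succ_right]
    simp

lemma poch_pos {z : ℝ} (hz : 0 < z) (k : ℕ) : 0 < poch z k := by
  rw [poch_eq_eval_ascPochhammer]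
  exact ascPochhammer_pos k z hz

lemma poch_add (z : ℝ) (p q : ℕ) : poch z (p + q) = poch z p * poch (z + p) q := by
  simp only [poch_eq_eval_ascPochhammer, ← ascPochhammer_mul, eval_mul, eval_comp, eval_add,
    eval_X, eval_natCast]

lemma Gamma_add_natCast {z : ℝ} (hz : 0 < z) (m : ℕ) :
    Real.Gamma (z + m) = poch z m * Real.Gamma z := by
  induction m with
  | zero => simp [poch]
  | succ m ih =>
    rw [Nat.cast_succ, ← add_assoc, Real.Gamma_add_one (by positivity), ih, poch, poch,
      Finset.prod_range_succ]
    ring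

lemma sum_neg_one_pow_mul_choose_mul_eval_eq_zero {n : ℕ} {p : ℝ[X]} (hp : p.natDegree < n) :
    ∑ j ∈ Finset.range (n + 1), (-1 : ℝ) ^ (n - j) * (n.choose j : ℝ) * p.eval (j : ℝ) = 0 := by
  have h := congr_fun (Polynomial.fwdDiff_iter_eq_zero_of_degree_lt hp) 0
  rw [fwdDiff_iter_eq_sum_shift] at h
  simpa [zsmul_eq_mul] using h

lemma poch_shift_mul_poch (α : ℝ) {j n : ℕ} (hj : j ≤ n) (k : ℕ) :
    poch (α + j) (n - j) * poch α (k + j) = poch α n * poch (α + j) k := by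
  have hn : poch α n = poch α j * poch (α + j) (n - j) := by
    rw [← poch_add, Nat.add_sub_cancel' hj]
  rw [hn, add_comm k, poch_add]
  ring

lemma poch_mul_poch_mul_poch (ε : ℝ) {j k L n : ℕ} (hkL : k ≤ L) (hj : j ≤ n) :
    poch ε (k + j) * poch (ε + k + j) (L - k) * poch (ε + L + j) (n - j) = poch ε (n + L) := by
  rw [show n + L = k + j + (L - k) + (n - j) by omega,
    poch_add ε (k + j + (L - k)), poch_add ε (k + j)]
  congr 2 <;> push_cast [Nat.cast_sub hkL] <;> ring_nf

lemma eval_comp_ascPochhammer (z x : ℝ) (k : ℕ) :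
    ((ascPochhammer ℝ k).comp (C z + X)).eval x = poch (z + x) k := by
  rw [eval_comp, poch_eq_eval_ascPochhammer]
  simp

lemma natDegree_comp_ascPochhammer (z : ℝ) (k : ℕ) :
    ((ascPochhammer ℝ k).comp (C z + X)).natDegree = k := by
  rw [natDegree_comp, ascPochhammer_natDegree, add_comm, natDegree_X_add_C, mul_one]

lemma sum_choose_poch_div_mul_moment_eq_zero {α β ε : ℝ} (hε : 0 < ε) {n k L : ℕ}
    (hkL : k ≤ L) (hLn : k + L < n) :
    ∑ j ∈ Finset.range (n + 1), (-1 : ℝ) ^ (n - j) * (n.choose j : ℝ) *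
        (poch (α + j) (n - j) * poch (β + j) (n - j) / poch (ε + L + j) (n - j)) *
        (poch α (k + j) * poch β (k + j) / poch ε (k + j)) = 0 := by
  set q : ℝ[X] := (ascPochhammer ℝ k).comp (C α + X) * (ascPochhammer ℝ k).comp (C β + X) *
    (ascPochhammer ℝ (L - k)).comp (C (ε + k) + X)
  have hq : q.natDegree < n := by
    calc q.natDegree ≤ k + k + (L - k) := by
          refine (natDegree_mul_le).trans (add_le_add (natDegree_mul_le.trans ?_) ?_) <;>
            simp only [natDegree_comp_ascPochhammer, le_refl]
      _ < n := by omega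
  have hterm : ∀ j ∈ Finset.range (n + 1),
      (-1 : ℝ) ^ (n - j) * (n.choose j : ℝ) *
        (poch (α + j) (n - j) * poch (β + j) (n - j) / poch (ε + L + j) (n - j)) *
        (poch α (k + j) * poch β (k + j) / poch ε (k + j)) =
      poch α n * poch β n / poch ε (n + L) *
        ((-1 : ℝ) ^ (n - j) * (n.choose j : ℝ) * q.eval (j : ℝ)) := by
    intro j hj
    have hjn : j ≤ n := Nat.lt_succ_iff.mp (Finset.mem_range.mp hj)
    have h1 := poch_pos (z := ε + L + j) (by positivity) (n - j)
    have h2 := poch_pos (z := ε + k + j) (by positivity) (L - k)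
    have h3 := poch_pos hε (k + j)
    simp only [q, eval_mul, eval_comp_ascPochhammer, ← poch_mul_poch_mul_poch ε hkL hjn]
    field_simp
    linear_combination
      ((n.choose j : ℝ) * poch (β + j) (n - j) * poch β (k + j)) * poch_shift_mul_poch α hjn k +
      ((n.choose j : ℝ) * poch α n * poch (α + j) k) * poch_shift_mul_poch β hjn k
  rw [Finset.sum_congr rfl hterm, ← Finset.mul_sum,
    sum_neg_one_pow_mul_choose_mul_eval_eq_zero hq, mul_zero]

open Real

noncomputable def laplace (φ : ℝ → ℝ) (x : ℝ) : ℝ := ∫ t in Ioi (0 : ℝ), φ t * exp (-t * x)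

noncomputable def tricomiKernel (α β t : ℝ) : ℝ := t ^ (α - 1) * (1 + t) ^ (β - α - 1)

lemma TricomiU_eq_laplace (α β x : ℝ) :
    TricomiU α β x = 1 / Gamma α * laplace (tricomiKernel α β) x :=
  rfl

lemma measurable_tricomiKernel (α β : ℝ) : Measurable (tricomiKernel α β) := by
  unfold tricomiKernel
  fun_prop

lemma tricomiKernel_nonneg (α β : ℝ) {t : ℝ} (ht : 0 < t) : 0 ≤ tricomiKernel α β t :=
  mul_nonneg (rpow_nonneg ht.le _) (rpow_nonneg (by linarith) _)

lemma laplace_rpow_sub_one {u x : ℝ} (hu : 0 < u) (hx : 0 < x) :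
    laplace (fun t => t ^ (u - 1)) x = Gamma u * x ^ (-u) := by
  have h := integral_rpow_mul_exp_neg_mul_Ioi hu hx
  rw [one_div, inv_rpow hx.le, ← rpow_neg hx.le, mul_comm] at h
  rw [laplace, ← h]
  simp_rw [neg_mul, mul_comm x]

lemma integral_rpow_sub_one_mul_exp_neg_mul {s r : ℝ} (hs : 0 < s) (hr : 0 < r) :
    ∫ x in Ioi (0 : ℝ), x ^ (s - 1) * exp (-(r * x)) = Gamma s * r ^ (-s) := by
  rw [integral_rpow_mul_exp_neg_mul_Ioi hs hr, one_div, inv_rpow hr.le, ← rpow_neg hr.le,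
    mul_comm]

lemma integral_laplace_kernel (s : ℝ) (φ : ℝ → ℝ) (x : ℝ) :
    ∫ t in Ioi (0 : ℝ), φ t * (x ^ (s - 1) * exp (-((1 + t) * x))) =
      x ^ (s - 1) * exp (-x) * laplace φ x := by
  rw [laplace, ← integral_const_mul]
  congr 1 with t
  rw [show -((1 + t) * x) = -x + -t * x by ring, exp_add]
  ring

section Laplace

variable {s : ℝ} {φ : ℝ → ℝ}

/-- The kernel is nonnegative, so integrability follows from finiteness of the iterated
integral `∫ Γ(s) φ(t) (1+t)^{-s} dt`. -/
lemma integrable_laplace_kernel (hs : 0 < s) (hφ : Measurable φ)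
    (hφ0 : ∀ t ∈ Ioi (0 : ℝ), 0 ≤ φ t)
    (hint : IntegrableOn (fun t => φ t * (1 + t) ^ (-s)) (Ioi 0)) :
    Integrable (Function.uncurry fun t x : ℝ => φ t * (x ^ (s - 1) * exp (-((1 + t) * x))))
      ((volume.restrict (Ioi 0)).prod (volume.restrict (Ioi 0))) := by
  have hslice : ∀ t ∈ Ioi (0 : ℝ),
      ∫ x in Ioi (0 : ℝ), φ t * (x ^ (s - 1) * exp (-((1 + t) * x))) =
        Gamma s * (φ t * (1 + t) ^ (-s)) := by
    intro t ht
    rw [integral_const_mul, integral_rpow_sub_one_mul_exp_neg_mul hs (by linarith [mem_Ioi.mp ht])]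
    ring
  rw [integrable_prod_iff (by apply Measurable.aestronglyMeasurable; fun_prop)]
  constructor
  · filter_upwards [ae_restrict_mem measurableSet_Ioi] with t ht
    have h := (integrableOn_rpow_mul_exp_neg_mul_rpow (s := s - 1) (p := 1) (by linarith)
      one_pos (by linarith [mem_Ioi.mp ht] : 0 < 1 + t)).const_mul (φ t)
    exact IntegrableOn.congr_fun h
      (fun x _ => by rw [Function.uncurry_apply_pair, rpow_one, neg_mul]) measurableSet_Ioi
  · refine (hint.const_mul (Gamma s)).congr ?_
    filter_upwards [ae_restrict_mem measurableSet_Ioi] with t ht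
    rw [← hslice t ht]
    refine setIntegral_congr_fun measurableSet_Ioi fun x hx => ?_
    have := hφ0 t ht
    have : (0 : ℝ) < x := hx
    exact (norm_of_nonneg (by positivity)).symm

lemma integral_rpow_mul_exp_neg_mul_laplace (hs : 0 < s) (hφ : Measurable φ)
    (hφ0 : ∀ t ∈ Ioi (0 : ℝ), 0 ≤ φ t)
    (hint : IntegrableOn (fun t => φ t * (1 + t) ^ (-s)) (Ioi 0)) :
    ∫ x in Ioi (0 : ℝ), x ^ (s - 1) * exp (-x) * laplace φ x =
      Gamma s * ∫ t in Ioi (0 : ℝ), φ t * (1 + t) ^ (-s) := by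
  simp_rw [← integral_laplace_kernel s φ]
  rw [← integral_integral_swap (integrable_laplace_kernel hs hφ hφ0 hint), ← integral_const_mul]
  refine setIntegral_congr_fun measurableSet_Ioi fun t ht => ?_
  rw [integral_const_mul, integral_rpow_sub_one_mul_exp_neg_mul hs (by linarith [mem_Ioi.mp ht])]
  ring

lemma integrableOn_rpow_mul_exp_neg_mul_laplace (hs : 0 < s) (hφ : Measurable φ)
    (hφ0 : ∀ t ∈ Ioi (0 : ℝ), 0 ≤ φ t)
    (hint : IntegrableOn (fun t => φ t * (1 + t) ^ (-s)) (Ioi 0)) :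
    IntegrableOn (fun x => x ^ (s - 1) * exp (-x) * laplace φ x) (Ioi 0) := by
  simp_rw [← integral_laplace_kernel s φ]
  exact (integrable_laplace_kernel hs hφ hφ0 hint).integral_prod_right

end Laplace

section BetaPrime

variable {u v : ℝ}

/-- Near `0` the integrand is at most `t^{u-1}`, near `∞` at most `t^{-v-1}`. -/
lemma integrableOn_betaPrime (hu : 0 < u) (hv : 0 < v) :
    IntegrableOn (fun t : ℝ => t ^ (u - 1) * (1 + t) ^ (-(u + v))) (Ioi 0) := by
  have hm : AEStronglyMeasurable (fun t : ℝ => t ^ (u - 1) * (1 + t) ^ (-(u + v))) volume :=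
    by apply Measurable.aestronglyMeasurable; fun_prop
  have hnorm : ∀ t ∈ Ioi (0 : ℝ),
      ‖t ^ (u - 1) * (1 + t) ^ (-(u + v))‖ = t ^ (u - 1) * (1 + t) ^ (-(u + v)) := fun t ht =>
    norm_of_nonneg (by have : (0 : ℝ) < t := ht; positivity)
  have h01 : IntegrableOn (fun t => t ^ (u - 1) * (1 + t) ^ (-(u + v))) (Ioc (0 : ℝ) 1) := by
    refine Integrable.mono' ((intervalIntegrable_iff_integrableOn_Ioc_of_le zero_le_one).mp
      (intervalIntegral.intervalIntegrable_rpow' (r := u - 1) (by linarith))) hm.restrict ?_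
    filter_upwards [ae_restrict_mem measurableSet_Ioc] with t ht
    rw [hnorm t ht.1]
    exact mul_le_of_le_one_right (rpow_nonneg ht.1.le _)
      (rpow_le_one_of_one_le_of_nonpos (by linarith [ht.1]) (by linarith))
  have h1 : IntegrableOn (fun t => t ^ (u - 1) * (1 + t) ^ (-(u + v))) (Ioi (1 : ℝ)) := by
    refine Integrable.mono' (integrableOn_Ioi_rpow_of_lt (by linarith : -v - 1 < -1) one_pos)
      hm.restrict ?_
    filter_upwards [ae_restrict_mem measurableSet_Ioi] with t (ht : 1 < t)
    have ht0 : 0 < t := by linarith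
    rw [hnorm t ht0, show -v - 1 = (u - 1) + -(u + v) by ring, rpow_add ht0]
    exact mul_le_mul_of_nonneg_left (rpow_le_rpow_of_nonpos ht0 (by linarith) (by linarith))
      (by positivity)
  simpa only [Ioc_union_Ioi_eq_Ioi zero_le_one] using h01.union h1

lemma integral_betaPrime (hu : 0 < u) (hv : 0 < v) :
    ∫ t in Ioi (0 : ℝ), t ^ (u - 1) * (1 + t) ^ (-(u + v)) =
      Gamma u * Gamma v / Gamma (u + v) := by
  have h := integral_rpow_mul_exp_neg_mul_laplace (by linarith : 0 < u + v)
    (by fun_prop : Measurable fun t : ℝ => t ^ (u - 1))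
    (fun t ht => rpow_nonneg (le_of_lt ht) _) (integrableOn_betaPrime hu hv)
  have hx : ∀ x ∈ Ioi (0 : ℝ), x ^ (u + v - 1) * exp (-x) * laplace (fun t => t ^ (u - 1)) x =
      Gamma u * (exp (-x) * x ^ (v - 1)) := by
    intro x (hx : 0 < x)
    rw [laplace_rpow_sub_one hu hx, show v - 1 = (u + v - 1) + -u by ring, rpow_add hx]
    ring
  rw [setIntegral_congr_fun measurableSet_Ioi hx, integral_const_mul, ← Gamma_eq_integral hv] at h
  rw [eq_div_iff (Gamma_pos_of_pos (by linarith)).ne', h, mul_comm]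

end BetaPrime

section Moments

variable {a b c : ℝ}

lemma pow_mul_W_eq (a b c : ℝ) {x : ℝ} (hx : 0 < x) (m : ℕ) :
    x ^ m * W a b c x = Gamma (c + b + 1) / (Gamma (a + 1) * Gamma (b + 1) * Gamma c) *
      (x ^ (a + m + 1 - 1) * exp (-x) * laplace (tricomiKernel c (a - b + 1)) x) := by
  rw [W, TricomiU_eq_laplace, show a + m + 1 - 1 = m + a by ring, rpow_add hx, rpow_natCast]
  field_simp

lemma eqOn_tricomiKernel_mul_rpow (a b c : ℝ) (m : ℕ) :
    EqOn (fun t => tricomiKernel c (a - b + 1) t * (1 + t) ^ (-(a + m + 1)))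
      (fun t => t ^ (c - 1) * (1 + t) ^ (-(c + (b + 1 + m)))) (Ioi 0) := by
  intro t (ht : 0 < t)
  simp only [tricomiKernel]
  rw [mul_assoc, ← rpow_add (by linarith)]
  ring_nf

lemma integrableOn_tricomiKernel_mul_rpow (hb : -1 < b) (hc : 0 < c) (m : ℕ) :
    IntegrableOn (fun t => tricomiKernel c (a - b + 1) t * (1 + t) ^ (-(a + m + 1))) (Ioi 0) :=
  (integrableOn_congr_fun (eqOn_tricomiKernel_mul_rpow a b c m) measurableSet_Ioi).mpr
    (integrableOn_betaPrime hc (by linarith [m.cast_nonneg (α := ℝ)]))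

lemma integrableOn_pow_mul_W (ha : -1 < a) (hb : -1 < b) (hc : 0 < c) (m : ℕ) :
    IntegrableOn (fun x => x ^ m * W a b c x) (Ioi 0) := by
  have hs : 0 < a + m + 1 := by linarith [m.cast_nonneg (α := ℝ)]
  refine IntegrableOn.congr_fun ((integrableOn_rpow_mul_exp_neg_mul_laplace hs
    (measurable_tricomiKernel c (a - b + 1)) (fun t ht => tricomiKernel_nonneg _ _ ht)
    (integrableOn_tricomiKernel_mul_rpow hb hc m)).const_mul _)
    (fun x (hx : 0 < x) => (pow_mul_W_eq a b c hx m).symm) measurableSet_Ioi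

lemma integral_pow_mul_W (ha : -1 < a) (hb : -1 < b) (hc : 0 < c) (m : ℕ) :
    ∫ x in Ioi (0 : ℝ), x ^ m * W a b c x =
      poch (a + 1) m * poch (b + 1) m / poch (c + b + 1) m := by
  have hs : 0 < a + m + 1 := by linarith [m.cast_nonneg (α := ℝ)]
  rw [setIntegral_congr_fun measurableSet_Ioi fun x (hx : 0 < x) => pow_mul_W_eq a b c hx m,
    integral_const_mul, integral_rpow_mul_exp_neg_mul_laplace hs
      (measurable_tricomiKernel c (a - b + 1)) (fun t ht => tricomiKernel_nonneg _ _ ht)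
      (integrableOn_tricomiKernel_mul_rpow hb hc m),
    setIntegral_congr_fun measurableSet_Ioi (eqOn_tricomiKernel_mul_rpow a b c m),
    integral_betaPrime hc (by linarith [m.cast_nonneg (α := ℝ)]),
    show a + m + 1 = a + 1 + m by ring, show c + (b + 1 + m) = c + b + 1 + m by ring,
    Gamma_add_natCast (by linarith), Gamma_add_natCast (by linarith),
    Gamma_add_natCast (by linarith)]
  have := Gamma_pos_of_pos (by linarith : 0 < a + 1)
  have := Gamma_pos_of_pos (by linarith : 0 < b + 1)
  have := Gamma_pos_of_pos (by linarith : 0 < c + b + 1)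
  have := Gamma_pos_of_pos hc
  have := poch_pos (by linarith : 0 < c + b + 1) m
  field_simp

end Moments

lemma integral_pow_mul_sum_mul_pow_mul {μ : Measure ℝ} {w : ℝ → ℝ} (k : ℕ) (s : Finset ℕ)
    (coef : ℕ → ℝ) (hw : ∀ j ∈ s, Integrable (fun x => x ^ (k + j) * w x) μ) :
    ∫ x, x ^ k * (∑ j ∈ s, coef j * x ^ j) * w x ∂μ =
      ∑ j ∈ s, coef j * ∫ x, x ^ (k + j) * w x ∂μ := by
  have h : ∀ x, x ^ k * (∑ j ∈ s, coef j * x ^ j) * w x =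
      ∑ j ∈ s, coef j * (x ^ (k + j) * w x) := by
    intro x
    rw [Finset.mul_sum, Finset.sum_mul]
    refine Finset.sum_congr rfl fun j _ => ?_
    rw [pow_add]
    ring
  simp_rw [h]
  rw [integral_finsetSum s fun j hj => (hw j hj).const_mul (coef j)]
  simp_rw [integral_const_mul]

theorem orthogonality_second_weight (a b c : ℝ) (ha : a > -1) (hb : b > -1)
    (hc : c > max 0 (a - b)) (d : ℕ) (hd : d ≤ 1) (k n : ℕ) (hkn : 2 * k + 2 ≤ n) :
    ∫ x in Set.Ioi (0:ℝ), x ^ k * Ptype2 d a b c n x * W a b (c + 1 - d) x = 0 := by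
  have hc' : 0 < c + 1 - d := by
    have : (d : ℝ) ≤ 1 := by exact_mod_cast hd
    linarith [le_max_left 0 (a - b)]
  set L := (n + d) / 2 + d - 1
  have hL : c + b + 1 + (((n + d) / 2 : ℕ) : ℝ) = c + 1 - d + b + 1 + L := by
    rw [Nat.cast_sub (by omega)]
    push_cast
    ring
  simp only [Ptype2]
  rw [integral_pow_mul_sum_mul_pow_mul k _ _
    fun j _ => integrableOn_pow_mul_W ha hb hc' (k + j)]
  simp_rw [integral_pow_mul_W ha hb hc' _, hL]
  exact sum_choose_poch_div_mul_moment_eq_zero (by linarith) (by omega) (by omega)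
end
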